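/- arXiv:2303.09848 — 5 statements merged into one kernel-verified Lean document; each statement's English description precedes it below -/
import Mathlib

section
/- For any distinct real numbers ν₁,…,ν_m and any s ∈ ℝ, the m×m matrix with entries K_s^Ai(ν_i,ν_j) := ∫₀^∞ Ai(ν_i+η+s)Ai(ν_j+η+s) dη is positive definite. -/
/-!
The matrix is the Gram matrix of the functions `η ↦ Ai (ν i + η + s)` in `L²(0, ∞)`, so it is
positive definite as soon as these functions are linearly independent. If
`∑ cᵢ Ai (x + aᵢ)` vanishes for large `x`, so does its second derivative, which by the Airy
equation equals `x ∑ cᵢ Ai (x + aᵢ) + ∑ cᵢ aᵢ Ai (x + aᵢ)`; hence every `∑ cᵢ aᵢᵏ Ai (x + aᵢ)`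
vanishes, and since the shifts `aᵢ` are distinct, the Vandermonde matrix gives
`cᵢ Ai (x + aᵢ) = 0`. A nonzero `cᵢ` would make `Ai` vanish on a half-line, hence everywhere by
uniqueness for the linear ODE `y'' = x y`.
-/

open MeasureTheory Filter Set

theorem Matrix.posDef_integral_mul {ι α : Type*} [Fintype ι] [MeasurableSpace α]
    {μ : Measure α} {f : ι → α → ℝ} (hf : ∀ i, MemLp (f i) 2 μ)
    (hf_indep : ∀ c : ι → ℝ, (fun x => ∑ i, c i * f i x) =ᵐ[μ] 0 → c = 0) :
    (Matrix.of fun i j => ∫ x, f i x * f j x ∂μ).PosDef := by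
  have hgram : (Matrix.of fun i j => ∫ x, f i x * f j x ∂μ) =
      Matrix.gram ℝ fun i => (hf i).toLp := by
    ext i j
    rw [Matrix.gram_apply, L2.inner_def]
    refine integral_congr_ae ?_
    filter_upwards [(hf i).coeFn_toLp, (hf j).coeFn_toLp] with x hi hj
    simp [hi, hj, mul_comm]
  rw [hgram]
  refine Matrix.posDef_gram_of_linearIndependent (Fintype.linearIndependent_iff.2 fun c hc => ?_)
  refine congrFun (hf_indep c ?_)
  filter_upwards [Lp.coeFn_finsetSum Finset.univ fun i => c i • (hf i).toLp,
    Lp.eq_zero_iff_ae_eq_zero.1 hc, ae_all_iff.2 fun i => Lp.coeFn_smul (c i) (hf i).toLp,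
    ae_all_iff.2 fun i => (hf i).coeFn_toLp] with x hsum hzero hsmul hcoe
  rw [hsum] at hzero
  simpa [hsmul, hcoe] using hzero

theorem eqOn_Iic_zero_of_deriv_deriv_eq_mul {f q : ℝ → ℝ} (hf : ContDiff ℝ 2 f)
    (hq : Continuous q) (hode : ∀ x, deriv (deriv f) x = q x * f x) {T : ℝ}
    (hT : f T = 0) (hT' : deriv f T = 0) : EqOn f 0 (Iic T) := by
  intro x hx
  obtain ⟨C, hC⟩ := isCompact_Icc.exists_bound_of_continuousOn (hq.continuousOn (s := Icc x T))
  have hf' : ContDiff ℝ 1 (deriv f) := hf.iterate_deriv' 1 1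
  -- `(f, f')` and `0` solve `p' = v t p` on `[x, T]` and agree at `T`.
  let v : ℝ → ℝ × ℝ → ℝ × ℝ := fun t p => (p.2, q t * p.1)
  have hlip : ∀ t ∈ Ioc x T, LipschitzOnWith (max 1 (Real.toNNReal C)) (v t) univ := by
    intro t ht
    refine (LipschitzWith.prod_snd.prodMk
      ((lipschitzWith_smul (q t)).comp LipschitzWith.prod_fst)).weaken ?_ |>.lipschitzOnWith
    refine max_le_max le_rfl ?_
    rw [mul_one, ← NNReal.coe_le_coe, coe_nnnorm, Real.coe_toNNReal']
    exact (hC t (Ioc_subset_Icc_self ht)).trans (le_max_left _ _)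
  have hsol : ∀ t ∈ Ioc x T, HasDerivWithinAt (fun t => (f t, deriv f t))
      (v t (f t, deriv f t)) (Iic t) t := fun t _ => by
    simpa [v, hode] using ((hf.differentiable two_ne_zero t).hasDerivAt.prodMk
      (hf'.differentiable one_ne_zero t).hasDerivAt).hasDerivWithinAt
  have hzero : ∀ t ∈ Ioc x T, HasDerivWithinAt (fun _ => (0 : ℝ × ℝ)) (v t 0) (Iic t) t :=
    fun t _ => (hasDerivWithinAt_const t (Iic t) 0).congr_deriv (Prod.ext rfl (mul_zero (q t)).symm)
  have hunique := ODE_solution_unique_of_mem_Icc_left hlip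
    (hf.continuous.prodMk (hf.continuous_deriv one_le_two)).continuousOn hsol
    (fun _ _ => mem_univ _) continuousOn_const hzero (fun _ _ => mem_univ _)
    (by simp [hT, hT']) ⟨le_rfl, hx⟩
  exact congrArg Prod.fst hunique

theorem eq_zero_of_deriv_deriv_eq_mul_of_eqOn_Ioi {f q : ℝ → ℝ} (hf : ContDiff ℝ 2 f)
    (hq : Continuous q) (hode : ∀ x, deriv (deriv f) x = q x * f x) {b : ℝ}
    (hb : EqOn f 0 (Ioi b)) : f = 0 := by
  have hnhds : f =ᶠ[nhds (b + 1)] 0 := eventuallyEq_of_mem (Ioi_mem_nhds (lt_add_one b)) hb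
  funext x
  rcases le_or_gt x (b + 1) with hx | hx
  · exact eqOn_Iic_zero_of_deriv_deriv_eq_mul hf hq hode hnhds.eq_of_nhds
      (by simpa using hnhds.deriv_eq) hx
  · exact hb (show b < x by linarith)

theorem deriv_sum_mul_comp_add {ι : Type*} [Fintype ι] {g : ℝ → ℝ} (hg : Differentiable ℝ g)
    (w a : ι → ℝ) :
    deriv (fun x => ∑ i, w i * g (x + a i)) = fun x => ∑ i, w i * deriv g (x + a i) :=
  funext fun x => (HasDerivAt.fun_sum fun i _ =>
    ((hg _).hasDerivAt.comp_add_const x (a i)).const_mul (w i)).deriv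

section Airy

variable {Ai : ℝ → ℝ} (hAi : ContDiff ℝ 2 Ai) (hode : ∀ x, deriv (deriv Ai) x = x * Ai x)
include hAi hode

theorem deriv_deriv_sum_mul_comp_add {ι : Type*} [Fintype ι] (w a : ι → ℝ) :
    deriv (deriv fun x => ∑ i, w i * Ai (x + a i)) =
      fun x => x * ∑ i, w i * Ai (x + a i) + ∑ i, w i * a i * Ai (x + a i) := by
  have hd' : Differentiable ℝ (deriv Ai) := (hAi.iterate_deriv' 1 1).differentiable one_ne_zero
  rw [deriv_sum_mul_comp_add (hAi.differentiable two_ne_zero), deriv_sum_mul_comp_add hd']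
  funext x
  simp only [hode, Finset.mul_sum, ← Finset.sum_add_distrib]
  exact Finset.sum_congr rfl fun i _ => by ring

theorem eqOn_sum_mul_pow_mul_comp_add_zero {ι : Type*} [Fintype ι] {c a : ι → ℝ} {b : ℝ}
    (h : EqOn (fun x => ∑ i, c i * Ai (x + a i)) 0 (Ioi b)) (k : ℕ) :
    EqOn (fun x => ∑ i, c i * a i ^ k * Ai (x + a i)) 0 (Ioi b) := by
  induction k with
  | zero => simpa using h
  | succ k ih =>
    intro x hx
    have h2 := (ih.deriv isOpen_Ioi).deriv isOpen_Ioi hx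
    have hk : ∑ i, c i * a i ^ k * Ai (x + a i) = 0 := ih hx
    rw [deriv_deriv_sum_mul_comp_add hAi hode] at h2
    simp only [hk, mul_zero, zero_add] at h2
    simpa [pow_succ, mul_assoc] using h2

theorem eq_zero_of_eqOn_sum_mul_comp_add_zero (hne : Ai ≠ 0) {m : ℕ} {a : Fin m → ℝ}
    (ha : Function.Injective a) {c : Fin m → ℝ} {b : ℝ}
    (h : EqOn (fun x => ∑ i, c i * Ai (x + a i)) 0 (Ioi b)) : c = 0 := by
  have hterm : ∀ x ∈ Ioi b, ∀ i, c i * Ai (x + a i) = 0 := fun x hx =>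
    congrFun <| Matrix.eq_zero_of_forall_pow_sum_mul_pow_eq_zero ha fun k => by
      simpa [mul_right_comm] using eqOn_sum_mul_pow_mul_comp_add_zero hAi hode h k hx
  funext i
  by_contra hci
  refine hne (eq_zero_of_deriv_deriv_eq_mul_of_eqOn_Ioi hAi continuous_id hode
    (b := b + a i) fun y hy => ?_)
  have hy' := hterm (y - a i) (by rw [mem_Ioi] at hy ⊢; linarith) i
  rw [sub_add_cancel] at hy'
  exact (mul_eq_zero.1 hy').resolve_left hci

end Airy

/-- For distinct reals `ν₁,…,ν_m` and any `s ∈ ℝ`, the `m×m` matrix with entries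
`K_s^Ai(ν_i,ν_j) = ∫₀^∞ Ai(ν_i+η+s)Ai(ν_j+η+s) dη` is positive definite.
`Ai` is the Airy function (`Ai'' = x·Ai`, not identically zero, square integrable on
half-lines). -/
theorem shifted_airy_kernel_matrix_posDef
    (Ai : ℝ → ℝ) (hC2 : ContDiff ℝ 2 Ai)
    (hODE : ∀ x, deriv (deriv Ai) x = x * Ai x)
    (hAi_ne : Ai ≠ 0)
    (s : ℝ) (m : ℕ) (ν : Fin m → ℝ) (hν : Function.Injective ν)
    (hL2 : ∀ i, MemLp (fun η => Ai (ν i + η + s)) 2 (volume.restrict (Set.Ioi (0:ℝ)))) :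
    (Matrix.of fun i j : Fin m =>
      ∫ η in Set.Ioi (0:ℝ), Ai (ν i + η + s) * Ai (ν j + η + s)).PosDef := by
  refine Matrix.posDef_integral_mul hL2 fun c hc => ?_
  have hcont : Continuous fun η => ∑ i, c i * Ai (ν i + η + s) := by
    have hAi_cont := hC2.continuous
    fun_prop
  have hzero := Measure.eqOn_open_of_ae_eq hc isOpen_Ioi hcont.continuousOn continuousOn_const
  refine eq_zero_of_eqOn_sum_mul_comp_add_zero hC2 hODE hAi_ne (a := fun i => ν i + s)
    (fun i j hij => hν (add_right_cancel hij)) (b := 0) fun x hx => ?_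
  refine (Finset.sum_congr rfl fun i _ => ?_).trans (hzero hx)
  rw [← add_assoc, add_comm x]
end

section
/- For any s ∈ ℝ, the functions t ↦ Ai(ν₁+t), …, t ↦ Ai(ν_m+t), viewed as elements of L²(s,+∞), are linearly independent whenever ν₁,…,ν_m are distinct real numbers. -/
/-!
If `∑ cᵢ Ai(νᵢ + t) = 0` on `(s, ∞)`, apply the operator `d²/dt² - t`, which multiplies the
translate `t ↦ Ai(ν + t)` by `ν`: repeatedly, it gives `∑ cᵢ νᵢᵏ Ai(νᵢ + t) = 0` for every `k`.
The Vandermonde matrix of the distinct `νᵢ` is invertible, so each `cᵢ Ai(νᵢ + t)` vanishes on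
`(s, ∞)`. A solution of `y'' = x y` vanishing on a half-line vanishes identically by uniqueness
for the first-order system satisfied by `(y, y')`, and `Ai ≠ 0` forces `cᵢ = 0`.
-/

open MeasureTheory Filter Set Topology

namespace MeasureTheory.MemLp

variable {α E 𝕜 ι : Type*} [MeasurableSpace α] {μ : Measure α} {p : ENNReal}
  [NormedField 𝕜] [NormedAddCommGroup E] [NormedSpace 𝕜 E] {f : ι → α → E}

theorem toLp_finsetSum_smul (hf : ∀ i, MemLp (f i) p μ) (c : ι → 𝕜) (s : Finset ι)
    (hs : MemLp (∑ i ∈ s, c i • f i) p μ) :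
    hs.toLp _ = ∑ i ∈ s, c i • (hf i).toLp (f i) := by
  classical
  induction s using Finset.induction_on with
  | empty => simp
  | insert j s hj ih =>
    conv_rhs => rw [Finset.sum_insert hj]
    rw [← ih (memLp_finsetSum' s fun i _ => (hf i).const_smul (c i)), ← toLp_const_smul,
      ← toLp_add, toLp_eq_toLp_iff, Finset.sum_insert hj]

theorem linearIndependent_toLp [Fact (1 ≤ p)] [Fintype ι] (hf : ∀ i, MemLp (f i) p μ)
    (h : ∀ c : ι → 𝕜, ∑ i, c i • f i =ᵐ[μ] 0 → c = 0) :
    LinearIndependent 𝕜 fun i => (hf i).toLp (f i) := by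
  rw [Fintype.linearIndependent_iff]
  intro c hc
  refine congrFun (h c ?_)
  have hs := memLp_finsetSum' Finset.univ fun i _ => (hf i).const_smul (c i)
  rw [← toLp_finsetSum_smul hf c _ hs, ← toLp_zero (zero : MemLp (0 : α → E) p μ)] at hc
  exact (toLp_eq_toLp_iff _ _).1 hc

end MeasureTheory.MemLp

theorem IsOpen.eqOn_zero_of_hasDerivAt {𝕜 F : Type*} [NontriviallyNormedField 𝕜]
    [NormedAddCommGroup F] [NormedSpace 𝕜 F] {f f' : 𝕜 → F} {U : Set 𝕜} (hU : IsOpen U)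
    (hf : ∀ x ∈ U, HasDerivAt f (f' x) x) (h : EqOn f 0 U) : EqOn f' 0 U := by
  intro x hx
  have hloc : f =ᶠ[𝓝 x] fun _ => 0 := h.eventuallyEq_of_mem (hU.mem_nhds hx)
  exact (hf x hx).unique ((hasDerivAt_const x (0 : F)).congr_of_eventuallyEq hloc)

theorem hasDerivAt_sum_mul_comp_const_add {𝕜 ι : Type*} [NontriviallyNormedField 𝕜]
    [Fintype ι] {f f' : 𝕜 → 𝕜} (hf : ∀ x, HasDerivAt f (f' x) x) (c ν : ι → 𝕜) (t : 𝕜) :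
    HasDerivAt (fun t => ∑ i, c i * f (ν i + t)) (∑ i, c i * f' (ν i + t)) t :=
  HasDerivAt.fun_sum fun i _ => ((hf _).comp_const_add (ν i) t).const_mul (c i)

theorem ContDiff.hasDerivAt_deriv_of_deriv_deriv_eq {f f'' : ℝ → ℝ} (hf : ContDiff ℝ 2 f)
    (hf'' : ∀ x, deriv (deriv f) x = f'' x) (x : ℝ) : HasDerivAt (deriv f) (f'' x) x := by
  have hd : Differentiable ℝ (deriv f) := (hf.iterate_deriv' 1 1).differentiable one_ne_zero
  simpa [hf''] using (hd x).hasDerivAt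

def airyField (t : ℝ) (y : ℝ × ℝ) : ℝ × ℝ := (y.2, t * y.1)

theorem lipschitzWith_airyField (t : ℝ) : LipschitzWith (max 1 ‖t‖₊) (airyField t) :=
  LipschitzWith.prod_snd.prodMk
    ((lipschitzWith_smul t).comp LipschitzWith.prod_fst |>.weaken (by simp))

section AiryEquation

variable {g g' : ℝ → ℝ}

theorem airy_eq_zero_of_eqOn_Ioi (hg : ∀ x, HasDerivAt g (g' x) x)
    (hg' : ∀ x, HasDerivAt g' (x * g x) x) {a : ℝ} (h : EqOn g 0 (Ioi a)) : g = 0 := by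
  funext x
  set b := max x a + 1
  have hxb : x ≤ b := by linarith [le_max_left x a]
  have hab : a < b := by linarith [le_max_right x a]
  have hg'b : g' b = 0 := isOpen_Ioi.eqOn_zero_of_hasDerivAt (fun y _ => hg y) h hab
  have hsol : ∀ t, HasDerivAt (fun y => (g y, g' y)) (airyField t (g t, g' t)) t :=
    fun t => (hg t).prodMk (hg' t)
  have hLip : ∀ t ∈ Ioc x b, LipschitzOnWith (max 1 (max ‖x‖₊ ‖b‖₊)) (airyField t) univ := by
    intro t ht
    refine ((lipschitzWith_airyField t).weaken (max_le_max le_rfl ?_)).lipschitzOnWith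
    rw [← NNReal.coe_le_coe]
    exact abs_le_max_abs_abs ht.1.le ht.2
  have hsol_eq_zero := ODE_solution_unique_of_mem_Icc_left (g := fun _ => 0) hLip
    (fun t _ => (hsol t).continuousAt.continuousWithinAt) (fun t _ => (hsol t).hasDerivWithinAt)
    (fun _ _ => mem_univ _) continuousOn_const
    (fun t _ => by simpa [airyField, Prod.zero_eq_mk] using hasDerivWithinAt_const t (Iic t) (0 : ℝ × ℝ))
    (fun _ _ => mem_univ _) (by simp [h hab, hg'b]) ⟨le_rfl, hxb⟩
  simpa using congrArg Prod.fst hsol_eq_zero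

variable {ι : Type*} [Fintype ι]

theorem airy_eqOn_sum_mul_translate_mul (hg : ∀ x, HasDerivAt g (g' x) x)
    (hg' : ∀ x, HasDerivAt g' (x * g x) x) {c ν : ι → ℝ} {U : Set ℝ} (hU : IsOpen U)
    (h : EqOn (fun t => ∑ i, c i * g (ν i + t)) 0 U) :
    EqOn (fun t => ∑ i, c i * ν i * g (ν i + t)) 0 U := by
  have h' := hU.eqOn_zero_of_hasDerivAt (fun t _ => hasDerivAt_sum_mul_comp_const_add hg c ν t) h
  have h'' :=
    hU.eqOn_zero_of_hasDerivAt (fun t _ => hasDerivAt_sum_mul_comp_const_add hg' c ν t) h'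
  intro t ht
  have hsplit : ∑ i, c i * ((ν i + t) * g (ν i + t)) =
      ∑ i, c i * ν i * g (ν i + t) + t * ∑ i, c i * g (ν i + t) := by
    rw [Finset.mul_sum, ← Finset.sum_add_distrib]
    exact Finset.sum_congr rfl fun i _ => by ring
  simpa [hsplit, h ht] using h'' ht

theorem airy_eqOn_sum_mul_pow_translate (hg : ∀ x, HasDerivAt g (g' x) x)
    (hg' : ∀ x, HasDerivAt g' (x * g x) x) {c ν : ι → ℝ} {U : Set ℝ} (hU : IsOpen U)
    (h : EqOn (fun t => ∑ i, c i * g (ν i + t)) 0 U) (k : ℕ) :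
    EqOn (fun t => ∑ i, c i * ν i ^ k * g (ν i + t)) 0 U := by
  induction k with
  | zero => simpa using h
  | succ k ih => simpa [pow_succ, mul_assoc] using airy_eqOn_sum_mul_translate_mul hg hg' hU ih

end AiryEquation

/-- For any `s ∈ ℝ`, the functions `t ↦ Ai(ν_i + t)`, viewed as elements of
`L²(s,+∞)`, are linearly independent whenever the `ν_i` are distinct reals.
`Ai` is the Airy function (`Ai'' = x·Ai`, not identically zero). -/
theorem airy_translates_linearIndependent_L2
    (Ai : ℝ → ℝ) (hC2 : ContDiff ℝ 2 Ai)
    (hODE : ∀ x, deriv (deriv Ai) x = x * Ai x)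
    (hAi_ne : Ai ≠ 0)
    (s : ℝ) (m : ℕ) (ν : Fin m → ℝ) (hν : Function.Injective ν)
    (hL2 : ∀ i, MemLp (fun t => Ai (ν i + t)) 2 (volume.restrict (Set.Ioi s))) :
    LinearIndependent ℝ (fun i : Fin m => (hL2 i).toLp _) := by
  have hAi : ∀ x, HasDerivAt Ai (deriv Ai x) x :=
    fun x => (hC2.differentiable two_ne_zero x).hasDerivAt
  have hAi' := hC2.hasDerivAt_deriv_of_deriv_deriv_eq hODE
  refine MemLp.linearIndependent_toLp hL2 fun c hc => ?_
  have hcomb : EqOn (fun t => ∑ i, c i * Ai (ν i + t)) 0 (Ioi s) := by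
    have hcont : Continuous fun t => ∑ i, c i * Ai (ν i + t) := by
      have := hC2.continuous
      fun_prop
    refine Measure.eqOn_of_ae_eq (μ := volume) ?_ hcont.continuousOn continuousOn_const
      (by rw [interior_Ioi]; exact subset_closure)
    simpa [Finset.sum_fn] using hc
  have hcoef : ∀ t ∈ Ioi s, (fun i => c i * Ai (ν i + t)) = 0 := fun t ht =>
    Matrix.eq_zero_of_forall_pow_sum_mul_pow_eq_zero hν fun k => by
      simpa [mul_right_comm] using airy_eqOn_sum_mul_pow_translate hAi hAi' isOpen_Ioi hcomb k ht
  funext i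
  by_contra hci
  refine hAi_ne (airy_eq_zero_of_eqOn_Ioi hAi hAi' (a := ν i + s) fun x hx => ?_)
  have hx' : x - ν i ∈ Ioi s := by
    rw [mem_Ioi] at hx ⊢
    linarith
  simpa using (mul_eq_zero.1 (congrFun (hcoef _ hx') i)).resolve_left hci
end

section
/- If a finite linear combination ∑_{i=1}^k c_i Ai(ν_i + t) vanishes identically in t, with ν₁,…,ν_k distinct real numbers, then all coefficients c_i are zero. -/
/-! Applying `d²/dt² - (t + a)` to a relation `∑ cᵢ Ai(νᵢ + t) = 0` and using `Ai'' = x Ai`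
turns it into the relation with coefficients `cᵢ (νᵢ - a)`. Iterating over `a ∈ {ν_i : i ≠ j}`
kills every term except the `j`-th, whose coefficient is `c_j ∏_{i ≠ j} (ν_j - ν_i)`; since the
`νᵢ` are distinct and `Ai ≢ 0`, this forces `c_j = 0`. -/

open Finset

variable {ι : Type*} [Fintype ι]

theorem sum_mul_deriv_const_add_eq_zero {F : ℝ → ℝ} (hF : Differentiable ℝ F) {ν c : ι → ℝ}
    (h : ∀ t, ∑ i, c i * F (ν i + t) = 0) (t : ℝ) :
    ∑ i, c i * deriv F (ν i + t) = 0 := by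
  have hderiv : HasDerivAt (fun t => ∑ i, c i * F (ν i + t)) (∑ i, c i * deriv F (ν i + t)) t :=
    HasDerivAt.fun_sum fun i _ => ((hF _).hasDerivAt.comp_const_add (ν i) t).const_mul (c i)
  rw [funext h] at hderiv
  exact hderiv.unique (hasDerivAt_const t 0)

section Airy

variable {Ai : ℝ → ℝ} (hAi : ContDiff ℝ 2 Ai) (hODE : ∀ x, deriv (deriv Ai) x = x * Ai x)
include hAi hODE

theorem sum_mul_sub_mul_airy_const_add_eq_zero {ν c : ι → ℝ}
    (h : ∀ t, ∑ i, c i * Ai (ν i + t) = 0) (a t : ℝ) :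
    ∑ i, c i * (ν i - a) * Ai (ν i + t) = 0 := by
  have hmul_x : ∑ i, c i * ((ν i + t) * Ai (ν i + t)) = 0 := by
    simpa only [hODE] using sum_mul_deriv_const_add_eq_zero hAi.differentiable_deriv_two
      (sum_mul_deriv_const_add_eq_zero (hAi.differentiable two_ne_zero) h) t
  calc ∑ i, c i * (ν i - a) * Ai (ν i + t)
      = ∑ i, c i * ((ν i + t) * Ai (ν i + t)) - (a + t) * ∑ i, c i * Ai (ν i + t) := by
        rw [mul_sum, ← sum_sub_distrib]
        exact sum_congr rfl fun i _ => by ring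
    _ = 0 := by rw [hmul_x, h t]; ring

theorem sum_mul_prod_sub_mul_airy_const_add_eq_zero {ν c : ι → ℝ}
    (h : ∀ t, ∑ i, c i * Ai (ν i + t) = 0) (A : Finset ℝ) (t : ℝ) :
    ∑ i, c i * (∏ a ∈ A, (ν i - a)) * Ai (ν i + t) = 0 := by
  classical
  induction A using Finset.induction_on generalizing t with
  | empty => simpa using h t
  | insert b A hb ih =>
    simpa only [prod_insert hb, mul_left_comm, mul_assoc] using
      sum_mul_sub_mul_airy_const_add_eq_zero hAi hODE ih b t

end Airy

/-- If a finite linear combination `∑ c_i Ai(ν_i + t)` vanishes identically in `t`, with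
`ν₁,…,ν_k` distinct reals, then all coefficients vanish. `Ai` satisfies `Ai'' = x·Ai`
and is not identically zero. -/
theorem airy_translates_pointwise_linearIndependent
    (Ai : ℝ → ℝ) (hC2 : ContDiff ℝ 2 Ai)
    (hODE : ∀ x, deriv (deriv Ai) x = x * Ai x)
    (hAi_ne : Ai ≠ 0)
    (k : ℕ) (ν : Fin k → ℝ) (hν : Function.Injective ν) (c : Fin k → ℝ)
    (hvanish : ∀ t : ℝ, ∑ i, c i * Ai (ν i + t) = 0) :
    ∀ i, c i = 0 := by
  intro j
  set A := (univ.erase j).image ν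
  have hprod_ne : ∏ a ∈ A, (ν j - a) ≠ 0 := by
    refine prod_ne_zero_iff.mpr fun a ha => sub_ne_zero.mpr ?_
    rintro rfl
    obtain ⟨i, hi, hij⟩ := mem_image.mp ha
    exact (mem_erase.mp hi).1 (hν hij)
  have hsingle (t : ℝ) : c j * (∏ a ∈ A, (ν j - a)) * Ai (ν j + t) = 0 := by
    rw [← sum_mul_prod_sub_mul_airy_const_add_eq_zero hC2 hODE hvanish A t,
      Fintype.sum_eq_single j fun i hij => ?_]
    rw [prod_eq_zero (mem_image_of_mem ν (mem_erase.mpr ⟨hij, mem_univ i⟩)) (sub_self _)]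
    ring
  obtain ⟨x, hx⟩ := Function.ne_iff.mp hAi_ne
  have hcj := (mul_eq_zero.mp (hsingle (x - ν j))).resolve_right (by rwa [add_sub_cancel])
  exact (mul_eq_zero.mp hcj).resolve_right hprod_ne
end

section
/- Suppose K is an orthogonal projection on L²(ℝ), σ : ℝ → [0,1] is measurable, and f ∈ L²(ℝ) satisfies M_{√σ} K M_{√σ} f = f, where M_g denotes multiplication by g. Then g := K(√σ f) satisfies √σ g = f and ‖g‖₂ ≤ ‖σ g‖₂, hence (σ − 1)g = 0 almost everywhere. -/
/-!
With `g = K(√σ f)`, the fixed-point equation gives `√σ f = σ g`, so `g = K(σ g)`. As `K` is an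
orthogonal projection, `σ g - g ⊥ g`, that is `∫ (1 - σ) g² = 0`; the integrand is nonnegative
because `σ ≤ 1`, so it vanishes almost everywhere. The norm bound is `‖K(σ g)‖ ≤ ‖σ g‖₂`.
-/

open MeasureTheory RealInnerProductSpace

section StarProjection

variable {𝕜 E : Type*} [RCLike 𝕜] [NormedAddCommGroup E] [InnerProductSpace 𝕜 E] [CompleteSpace E]
  {K : E →L[𝕜] E}

theorem IsStarProjection.inner_sub_apply_apply_eq_zero (hK : IsStarProjection K) (u : E) :
    inner 𝕜 (u - K u) (K u) = 0 := by
  have hsymm : inner 𝕜 (K u) (K u) = inner 𝕜 u (K (K u)) :=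
    hK.isSelfAdjoint.isSymmetric u (K u)
  have hidem : K (K u) = K u := DFunLike.congr_fun hK.isIdempotentElem.eq u
  rw [inner_sub_left, hsymm, hidem, sub_self]

theorem IsStarProjection.norm_apply_le (hK : IsStarProjection K) (u : E) : ‖K u‖ ≤ ‖u‖ := by
  simpa using K.le_of_opNorm_le hK.norm_le u

end StarProjection

theorem ae_sub_one_mul_eq_zero_of_inner_sub_eq_zero {α : Type*} [MeasurableSpace α]
    {μ : Measure α} {σ : α → ℝ} (hσ : ∀ x, σ x ≤ 1) {g h : Lp ℝ 2 μ}
    (hh : h =ᵐ[μ] fun x => σ x * g x) (horth : ⟪h - g, g⟫ = 0) :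
    ∀ᵐ x ∂μ, (σ x - 1) * g x = 0 := by
  have hpointwise : (fun x => ⟪(g - h) x, g x⟫) =ᵐ[μ] fun x => (1 - σ x) * (g x * g x) := by
    filter_upwards [hh, Lp.coeFn_sub g h] with x hx hsub
    rw [hsub, Pi.sub_apply, hx, real_inner_comm]
    simp only [RCLike.inner_apply, conj_trivial]
    ring
  have hzero : ∫ x, (1 - σ x) * (g x * g x) ∂μ = 0 := by
    rw [← integral_congr_ae hpointwise, ← L2.inner_def, ← neg_sub, inner_neg_left, horth,
      neg_zero]
  have hnonneg : 0 ≤ᵐ[μ] fun x => (1 - σ x) * (g x * g x) :=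
    ae_of_all _ fun x => mul_nonneg (sub_nonneg.2 (hσ x)) (mul_self_nonneg _)
  have hintegrable : Integrable (fun x => (1 - σ x) * (g x * g x)) μ :=
    (L2.integrable_inner (𝕜 := ℝ) (g - h) g).congr hpointwise
  filter_upwards [(integral_eq_zero_iff_of_nonneg_ae hnonneg hintegrable).1 hzero] with x hx
  rcases mul_eq_zero.1 hx with hσx | hgx
  · rw [← neg_sub, hσx, neg_zero, zero_mul]
  · rw [mul_self_eq_zero.1 hgx, mul_zero]

theorem fixed_point_of_thinned_projection_general
    (K : Lp ℝ 2 (volume : Measure ℝ) →L[ℝ] Lp ℝ 2 (volume : Measure ℝ))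
    (hK_proj : ∀ u, K (K u) = K u)
    (hK_sa : ∀ u v, ⟪K u, v⟫ = ⟪u, K v⟫)
    (σ : ℝ → ℝ) (hσ : ∀ x, σ x ∈ Set.Icc (0:ℝ) 1)
    (f sf : Lp ℝ 2 (volume : Measure ℝ))
    (hsf : (sf : ℝ → ℝ) =ᵐ[volume] fun x => Real.sqrt (σ x) * (f : ℝ → ℝ) x)
    (hfix : (fun x => Real.sqrt (σ x) * (K sf : ℝ → ℝ) x) =ᵐ[volume] (f : ℝ → ℝ)) :
    ((fun x => Real.sqrt (σ x) * (K sf : ℝ → ℝ) x) =ᵐ[volume] (f : ℝ → ℝ)) ∧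
    ‖K sf‖ ≤ (eLpNorm (fun x => σ x * (K sf : ℝ → ℝ) x) 2 volume).toReal ∧
    (∀ᵐ x ∂(volume : Measure ℝ), (σ x - 1) * (K sf : ℝ → ℝ) x = 0) := by
  have hK : IsStarProjection K :=
    ⟨ContinuousLinearMap.ext hK_proj, ContinuousLinearMap.isSelfAdjoint_iff_isSymmetric.2 hK_sa⟩
  have hsf_eq : (sf : ℝ → ℝ) =ᵐ[volume] fun x => σ x * (K sf : ℝ → ℝ) x := by
    filter_upwards [hsf, hfix] with x hsfx hfixx
    rw [hsfx, ← hfixx, ← mul_assoc, Real.mul_self_sqrt (hσ x).1]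
  refine ⟨hfix, ?_, ?_⟩
  · rw [← eLpNorm_congr_ae hsf_eq, ← Lp.norm_def]
    exact hK.norm_apply_le sf
  · exact ae_sub_one_mul_eq_zero_of_inner_sub_eq_zero (fun x => (hσ x).2) hsf_eq
      (hK.inner_sub_apply_apply_eq_zero sf)

/-- Suppose `K` is an orthogonal projection on `L²(ℝ)`, `σ : ℝ → [0,1]` is measurable,
and `f ∈ L²(ℝ)` satisfies `M_{√σ} K M_{√σ} f = f` (where `sf` represents `√σ·f` and the
fixed-point equation says `√σ · K(sf) = f` a.e.).  Then `g := K(sf)` satisfies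
`√σ g = f` a.e., `‖g‖₂ ≤ ‖σ g‖₂`, and `(σ − 1) g = 0` almost everywhere. -/
theorem fixed_point_of_thinned_projection
    (K : Lp ℝ 2 (volume : Measure ℝ) →L[ℝ] Lp ℝ 2 (volume : Measure ℝ))
    (hK_proj : ∀ u, K (K u) = K u)
    (hK_sa : ∀ u v, ⟪K u, v⟫ = ⟪u, K v⟫)
    (σ : ℝ → ℝ) (hσm : Measurable σ) (hσ : ∀ x, σ x ∈ Set.Icc (0:ℝ) 1)
    (f sf : Lp ℝ 2 (volume : Measure ℝ))
    (hsf : (sf : ℝ → ℝ) =ᵐ[volume] fun x => Real.sqrt (σ x) * (f : ℝ → ℝ) x)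
    (hfix : (fun x => Real.sqrt (σ x) * (K sf : ℝ → ℝ) x) =ᵐ[volume] (f : ℝ → ℝ)) :
    ((fun x => Real.sqrt (σ x) * (K sf : ℝ → ℝ) x) =ᵐ[volume] (f : ℝ → ℝ)) ∧
    ‖K sf‖ ≤ (eLpNorm (fun x => σ x * (K sf : ℝ → ℝ) x) 2 volume).toReal ∧
    (∀ᵐ x ∂(volume : Measure ℝ), (σ x - 1) * (K sf : ℝ → ℝ) x = 0) :=
  fixed_point_of_thinned_projection_general K hK_proj hK_sa σ hσ f sf hsf hfix
end

section
/- Let σ : ℝ → [0,1] be continuous with σ(λ) = O(|λ|^{-3/2-κ}) as λ → −∞ for some κ > 0. Then ∫_ℝ σ(λ) K_s^Ai(λ,λ) dλ is finite for every s ∈ ℝ, and tends to 0 as s → +∞, with rate O(s^{-κ}). -/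
open MeasureTheory Filter Asymptotics Set Real

/-!
Write `J(t) = ∫_t^∞ Ai²`, so that the integral in question is `∫ σ(λ) J(λ + s) dλ`.
The decay of `Ai` at `+∞` gives `J(t) ≲ e^{-2t}`, and its `|x|^{-1/4}` decay at `-∞` gives
`J(t) ≲ (1 + |t|)^{1/2}`. Split the integral at `λ = -s/2`. To the right, `σ ≤ 1` and
`J(λ + s) ≲ e^{-2(λ+s)}` contribute `O(e^{-s})`. To the left, `|λ + s| ≤ |λ|`, so the integrand
is `≲ |λ|^{-3/2-κ} |λ|^{1/2} = |λ|^{-1-κ}`, whose integral over `(-∞, -s/2]` is `O(s^{-κ})`.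
-/

theorem isBigO_top_of_isBigO_cocompact {X E F : Type*} [TopologicalSpace X]
    [SeminormedAddCommGroup E] [NormedAddCommGroup F] {f : X → E} {g : X → F}
    (hf : Continuous f) (hg : Continuous g) (hg0 : ∀ x, g x ≠ 0) (h : f =O[cocompact X] g) :
    f =O[⊤] g := by
  have hgpos : ∀ x, 0 < ‖g x‖ := fun x => norm_pos_iff.2 (hg0 x)
  have hratio : Continuous fun x => ‖f x‖ / ‖g x‖ :=
    hf.norm.div hg.norm fun x => (hgpos x).ne'
  obtain ⟨c, hc⟩ := h.bound
  obtain ⟨M, hM⟩ : ∃ M, ∀ y ∈ range fun x => ‖f x‖ / ‖g x‖, ‖y‖ ≤ M := by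
    refine isBounded_iff_forall_norm_le.1 <|
      hratio.isBounded_range_iff_isBigO.2 (IsBigO.of_bound c ?_)
    filter_upwards [hc] with x hx
    rw [norm_div, norm_norm, norm_norm, Pi.one_apply, norm_one, mul_one]
    exact (div_le_iff₀ (hgpos x)).2 hx
  refine isBigO_top.2 ⟨M, fun x => ?_⟩
  have := (le_abs_self _).trans ((Real.norm_eq_abs _).symm.trans_le (hM _ (mem_range_self x)))
  rwa [div_le_iff₀ (hgpos x)] at this

theorem isBigO_top_of_isBigO_atBot_of_isBigO_atTop {f g : ℝ → ℝ} (hf : Continuous f)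
    (hg : Continuous g) (hg0 : ∀ x, g x ≠ 0) (hbot : f =O[atBot] g) (htop : f =O[atTop] g) :
    f =O[⊤] g :=
  isBigO_top_of_isBigO_cocompact hf hg hg0 <| by
    rw [cocompact_eq_atBot_atTop]; exact hbot.sup htop

theorem Asymptotics.IsBigO.exists_Iic_bound {f g : ℝ → ℝ} (h : f =O[atBot] g) (a : ℝ) :
    ∃ c, ∃ b ≤ a, ∀ x ≤ b, |f x| ≤ c * |g x| := by
  obtain ⟨c, hc⟩ := h.bound
  obtain ⟨b, hb⟩ := eventually_atBot.1 hc
  exact ⟨c, min b a, min_le_right _ _, fun x hx => by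
    simpa only [Real.norm_eq_abs] using hb x (hx.trans (min_le_left _ _))⟩

theorem isBigO_atBot_abs_rpow_exp_neg {p : ℝ} (hp : p ≤ 0) :
    (fun x : ℝ => |x| ^ p) =O[atBot] fun x => exp (-x) := by
  refine IsBigO.of_bound 1 ?_
  filter_upwards [eventually_le_atBot (-1)] with x hx
  rw [Real.norm_of_nonneg (rpow_nonneg (abs_nonneg x) p), Real.norm_of_nonneg (exp_pos _).le,
    one_mul]
  have hx1 : 1 ≤ |x| := by rw [abs_of_neg (by linarith)]; linarith
  calc |x| ^ p ≤ 1 := rpow_le_one_of_one_le_of_nonpos hx1 hp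
    _ ≤ exp (-x) := one_le_exp (by linarith)

theorem integrableOn_Iic_abs_rpow {p a : ℝ} (hp : p < -1) (ha : a < 0) :
    IntegrableOn (fun x => |x| ^ p) (Iic a) := by
  have hneg := ((Measure.measurePreserving_neg (volume : Measure ℝ)).integrableOn_comp_preimage
    (Homeomorph.neg ℝ).measurableEmbedding).2 (integrableOn_Ioi_rpow_of_lt hp (neg_pos.2 ha))
  have hpre : (Neg.neg ⁻¹' Ioi (-a) : Set ℝ) = Iio a := by ext; simp
  rw [hpre] at hneg
  rw [integrableOn_Iic_iff_integrableOn_Iio]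
  refine hneg.congr_fun (fun x hx => ?_) measurableSet_Iio
  simp [abs_of_neg (hx.out.trans ha)]

theorem integral_Iic_abs_rpow {κ a : ℝ} (hκ : 0 < κ) (ha : a < 0) :
    ∫ x in Iic a, |x| ^ (-1 - κ) = (-a) ^ (-κ) / κ := by
  rw [setIntegral_congr_fun measurableSet_Iic (g := fun x => (-x) ^ (-1 - κ))
      (fun x hx => by rw [abs_of_neg (lt_of_le_of_lt hx ha)]),
    integral_comp_neg_Iic a (fun x => x ^ (-1 - κ)),
    integral_Ioi_rpow_of_lt (by linarith) (neg_pos.2 ha), show -1 - κ + 1 = -κ by ring]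
  field_simp

theorem integral_Ioc_abs_rpow_neg_half_le {t b : ℝ} (htb : t ≤ b) (hb : b < 0) :
    ∫ u in Ioc t b, |u| ^ (-(1/2 : ℝ)) ≤ 2 * |t| ^ (1/2 : ℝ) := by
  have hneg : EqOn (fun u => |u| ^ (-(1/2 : ℝ))) (fun u => (-u) ^ (-(1/2 : ℝ))) (uIcc t b) :=
    fun u hu => by dsimp only; rw [abs_of_neg ((uIcc_of_le htb ▸ hu).2.trans_lt hb)]
  rw [← intervalIntegral.integral_of_le htb, intervalIntegral.integral_congr hneg,
    intervalIntegral.integral_comp_neg (fun u => u ^ (-(1/2 : ℝ))),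
    integral_rpow (Or.inl (by norm_num)), abs_of_neg (htb.trans_lt hb)]
  have hb' := rpow_nonneg (neg_nonneg.2 hb.le) (1/2 : ℝ)
  norm_num
  linarith

theorem sq_le_of_abs_le_mul {a b C : ℝ} (h : |a| ≤ C * b) : a ^ 2 ≤ C ^ 2 * b ^ 2 := by
  rw [← mul_pow]; exact sq_le_sq' (neg_le_of_abs_le h) (le_of_abs_le h)

/-- For `f = Ai` this is the diagonal `K^Ai(t, t)` of the Airy kernel. -/
noncomputable def sqTail (f : ℝ → ℝ) (t : ℝ) : ℝ := ∫ u in Ioi t, f u ^ 2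

theorem setIntegral_Ioi_zero_sq_comp_add (f : ℝ → ℝ) (t : ℝ) :
    ∫ η in Ioi (0 : ℝ), f (t + η) ^ 2 = sqTail f t := by
  have := (measurePreserving_add_right volume t).setIntegral_preimage_emb
    (measurableEmbedding_addRight t) (fun u => f u ^ 2) (Ioi t)
  rw [preimage_add_const_Ioi, sub_self] at this
  simp_rw [sqTail, ← this, add_comm t]

theorem sqTail_nonneg (f : ℝ → ℝ) (t : ℝ) : 0 ≤ sqTail f t :=
  setIntegral_nonneg measurableSet_Ioi fun _ _ => sq_nonneg _

theorem sqTail_antitone {f : ℝ → ℝ} (hf : ∀ t, IntegrableOn (fun u => f u ^ 2) (Ioi t)) :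
    Antitone (sqTail f) := fun _ _ h =>
  setIntegral_mono_set (hf _) (ae_of_all _ fun _ => sq_nonneg _) (Ioi_subset_Ioi h).eventuallyLE

section ExpDecay

variable {f : ℝ → ℝ} {C : ℝ}

theorem sq_le_of_abs_le_exp (hC : ∀ x, |f x| ≤ C * exp (-x)) (x : ℝ) :
    f x ^ 2 ≤ C ^ 2 * exp (-2 * x) := by
  convert sq_le_of_abs_le_mul (hC x) using 2
  rw [sq, ← exp_add]; ring_nf

theorem integrableOn_sq_Ioi_of_abs_le_exp (hf : AEStronglyMeasurable f)
    (hC : ∀ x, |f x| ≤ C * exp (-x)) (t : ℝ) : IntegrableOn (fun u => f u ^ 2) (Ioi t) :=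
  ((exp_neg_integrableOn_Ioi t two_pos).const_mul (C ^ 2)).mono' (hf.pow 2).restrict <|
    ae_of_all _ fun x => by
      simpa only [norm_pow, Real.norm_eq_abs, sq_abs] using sq_le_of_abs_le_exp hC x

theorem sqTail_le_exp (hf : AEStronglyMeasurable f) (hC : ∀ x, |f x| ≤ C * exp (-x))
    (t : ℝ) : sqTail f t ≤ C ^ 2 / 2 * exp (-2 * t) := by
  calc sqTail f t ≤ ∫ u in Ioi t, C ^ 2 * exp (-2 * u) :=
        setIntegral_mono_on (integrableOn_sq_Ioi_of_abs_le_exp hf hC t)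
          ((exp_neg_integrableOn_Ioi t two_pos).const_mul _) measurableSet_Ioi
          fun x _ => sq_le_of_abs_le_exp hC x
    _ = C ^ 2 / 2 * exp (-2 * t) := by
        rw [integral_const_mul, integral_exp_mul_Ioi (by norm_num)]; ring

end ExpDecay

theorem sqTail_le_mul_one_add_abs_rpow {f : ℝ → ℝ} {b C : ℝ}
    (hf : ∀ t, IntegrableOn (fun u => f u ^ 2) (Ioi t)) (hb : b < 0)
    (hC : ∀ u ≤ b, |f u| ≤ C * |u| ^ (-(1/4 : ℝ))) (t : ℝ) :
    sqTail f t ≤ (sqTail f b + 2 * C ^ 2) * (1 + |t|) ^ (1/2 : ℝ) := by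
  have hb0 := sqTail_nonneg f b
  have hone : 1 ≤ (1 + |t|) ^ (1/2 : ℝ) :=
    one_le_rpow (le_add_of_nonneg_right (abs_nonneg t)) (by norm_num)
  rcases le_total b t with hbt | htb
  · calc sqTail f t ≤ sqTail f b := sqTail_antitone hf hbt
      _ ≤ (sqTail f b + 2 * C ^ 2) * 1 := by nlinarith [sq_nonneg C]
      _ ≤ _ := by gcongr
  have hsplit : sqTail f t = (∫ u in Ioc t b, f u ^ 2) + sqTail f b := by
    rw [sqTail, ← Ioc_union_Ioi_eq_Ioi htb, setIntegral_union (Ioc_disjoint_Ioi le_rfl)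
      measurableSet_Ioi ((hf t).mono_set Ioc_subset_Ioi_self) (hf b), sqTail]
  have hmaj : IntegrableOn (fun u => |u| ^ (-(1/2 : ℝ))) (Ioc t b) :=
    (ContinuousOn.integrableOn_Icc (continuous_abs.continuousOn.rpow_const fun u hu =>
      Or.inl (abs_ne_zero.2 (hu.2.trans_lt hb).ne))).mono_set Ioc_subset_Icc_self
  have hpiece : ∫ u in Ioc t b, f u ^ 2 ≤ C ^ 2 * (2 * |t| ^ (1/2 : ℝ)) := by
    calc ∫ u in Ioc t b, f u ^ 2 ≤ ∫ u in Ioc t b, C ^ 2 * |u| ^ (-(1/2 : ℝ)) := by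
          refine setIntegral_mono_on ((hf t).mono_set Ioc_subset_Ioi_self) (hmaj.const_mul _)
            measurableSet_Ioc fun u hu => ?_
          refine (sq_le_of_abs_le_mul (hC u hu.2)).trans_eq ?_
          rw [← rpow_mul_natCast (abs_nonneg u)]; norm_num
      _ ≤ C ^ 2 * (2 * |t| ^ (1/2 : ℝ)) := by
          rw [integral_const_mul]
          exact mul_le_mul_of_nonneg_left (integral_Ioc_abs_rpow_neg_half_le htb hb) (sq_nonneg C)
  have hmono : |t| ^ (1/2 : ℝ) ≤ (1 + |t|) ^ (1/2 : ℝ) :=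
    rpow_le_rpow (abs_nonneg t) (by linarith) (by norm_num)
  rw [hsplit]
  nlinarith [sq_nonneg C]

theorem mul_le_of_le_exp {a j A x y : ℝ} (ha : a ∈ Icc (0 : ℝ) 1) (hj : 0 ≤ j)
    (hjA : j ≤ A * exp (-2 * (x + y))) : a * j ≤ A * exp (-2 * y) * exp (-2 * x) :=
  calc a * j ≤ 1 * j := mul_le_mul_of_nonneg_right ha.2 hj
    _ ≤ A * exp (-2 * (x + y)) := by rwa [one_mul]
    _ = A * exp (-2 * y) * exp (-2 * x) := by rw [mul_assoc, ← exp_add]; ring_nf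

theorem mul_le_of_le_rpow {a j E K R κ x y : ℝ} (ha : 0 ≤ a)
    (hax : a ≤ E * |x| ^ (-(3/2 : ℝ) - κ)) (hj : 0 ≤ j) (hjy : j ≤ K * (1 + |y|) ^ (1/2 : ℝ))
    (hyx : 1 + |y| ≤ R * |x|) (hx : x ≠ 0) :
    a * j ≤ E * K * R ^ (1/2 : ℝ) * |x| ^ (-1 - κ) := by
  have hx0 : 0 < |x| := abs_pos.2 hx
  have hR : 0 ≤ R := nonneg_of_mul_nonneg_left ((by positivity : (0:ℝ) ≤ 1 + |y|).trans hyx) hx0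
  have hK : 0 ≤ K := nonneg_of_mul_nonneg_left (hj.trans hjy) (by positivity)
  have hjx : j ≤ K * R ^ (1/2 : ℝ) * |x| ^ (1/2 : ℝ) := by
    calc j ≤ K * (1 + |y|) ^ (1/2 : ℝ) := hjy
      _ ≤ K * (R * |x|) ^ (1/2 : ℝ) := by gcongr
      _ = K * R ^ (1/2 : ℝ) * |x| ^ (1/2 : ℝ) := by rw [mul_rpow hR hx0.le, mul_assoc]
  calc a * j ≤ E * |x| ^ (-(3/2 : ℝ) - κ) * (K * R ^ (1/2 : ℝ) * |x| ^ (1/2 : ℝ)) :=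
        mul_le_mul hax hjx hj (ha.trans hax)
    _ = E * K * R ^ (1/2 : ℝ) * |x| ^ (-1 - κ) := by
        rw [show -1 - κ = -(3/2 : ℝ) - κ + 1/2 by ring, rpow_add hx0]; ring

section WeightedKernel

variable {σ J : ℝ → ℝ} {b E K A κ : ℝ}

theorem integrable_mul_comp_add (hσm : Measurable σ) (hJm : Measurable J)
    (hσ : ∀ x, σ x ∈ Icc (0 : ℝ) 1) (hb : b ≤ -1)
    (hσb : ∀ x ≤ b, σ x ≤ E * |x| ^ (-(3/2 : ℝ) - κ)) (hκ : 0 < κ) (hJ : ∀ t, 0 ≤ J t)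
    (hJexp : ∀ t, J t ≤ A * exp (-2 * t)) (hJpoly : ∀ t, J t ≤ K * (1 + |t|) ^ (1/2 : ℝ))
    (s : ℝ) : Integrable fun x => σ x * J (x + s) := by
  have hmeas : AEStronglyMeasurable (fun x => σ x * J (x + s)) :=
    (hσm.mul (hJm.comp (measurable_add_const s))).aestronglyMeasurable
  have hnorm : ∀ x, ‖σ x * J (x + s)‖ = σ x * J (x + s) := fun x =>
    Real.norm_of_nonneg (mul_nonneg (hσ x).1 (hJ _))
  have hleft : IntegrableOn (fun x => σ x * J (x + s)) (Iic b) := by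
    refine ((integrableOn_Iic_abs_rpow (p := -1 - κ) (by linarith) (by linarith)).const_mul
      (E * K * (2 + |s|) ^ (1/2 : ℝ))).mono' hmeas.restrict ?_
    filter_upwards [ae_restrict_mem measurableSet_Iic] with x hx
    have hx1 : 1 ≤ |x| := by rw [abs_of_neg (by linarith [hx.out])]; linarith [hx.out]
    rw [hnorm]
    refine mul_le_of_le_rpow (hσ x).1 (hσb x hx) (hJ _) (hJpoly _) ?_ (by linarith [hx.out])
    nlinarith [abs_add_le x s, abs_nonneg s]
  have hright : IntegrableOn (fun x => σ x * J (x + s)) (Ioi b) :=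
    ((exp_neg_integrableOn_Ioi b two_pos).const_mul (A * exp (-2 * s))).mono' hmeas.restrict <|
      ae_of_all _ fun x => (hnorm x).trans_le (mul_le_of_le_exp (hσ x) (hJ _) (hJexp _))
  rw [← integrableOn_univ, ← Iic_union_Ioi (a := b)]
  exact hleft.union hright

theorem integral_mul_comp_add_le (hσm : Measurable σ) (hJm : Measurable J)
    (hσ : ∀ x, σ x ∈ Icc (0 : ℝ) 1) (hb : b ≤ -1)
    (hσb : ∀ x ≤ b, σ x ≤ E * |x| ^ (-(3/2 : ℝ) - κ)) (hκ : 0 < κ) (hJ : ∀ t, 0 ≤ J t)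
    (hJexp : ∀ t, J t ≤ A * exp (-2 * t)) (hJpoly : ∀ t, J t ≤ K * (1 + |t|) ^ (1/2 : ℝ))
    {s : ℝ} (hs : -2 * b ≤ s) :
    ∫ x, σ x * J (x + s) ≤
      E * K * 2 ^ (1/2 : ℝ) * 2 ^ κ / κ * s ^ (-κ) + A / 2 * exp (-s) := by
  have hint := integrable_mul_comp_add hσm hJm hσ hb hσb hκ hJ hJexp hJpoly s
  have hs0 : 0 < s := by linarith
  have hleft : ∫ x in Iic (-s / 2), σ x * J (x + s) ≤
      E * K * 2 ^ (1/2 : ℝ) * 2 ^ κ / κ * s ^ (-κ) := by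
    calc ∫ x in Iic (-s / 2), σ x * J (x + s)
        ≤ ∫ x in Iic (-s / 2), E * K * 2 ^ (1/2 : ℝ) * |x| ^ (-1 - κ) := by
          refine setIntegral_mono_on hint.integrableOn
            ((integrableOn_Iic_abs_rpow (p := -1 - κ) (by linarith) (by linarith)).const_mul _)
            measurableSet_Iic fun x hx => ?_
          have hx' : x ≤ -s / 2 := hx
          have habs : |x| = -x := abs_of_neg (by linarith)
          refine mul_le_of_le_rpow (hσ x).1 (hσb x (by linarith)) (hJ _) (hJpoly _) ?_
            (by linarith)
          have hxs : |x + s| ≤ -x := abs_le.2 ⟨by linarith, by linarith⟩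
          rw [habs]
          linarith
      _ = E * K * 2 ^ (1/2 : ℝ) * 2 ^ κ / κ * s ^ (-κ) := by
          rw [integral_const_mul, integral_Iic_abs_rpow hκ (by linarith), neg_div, neg_neg,
            div_rpow hs0.le zero_le_two, rpow_neg zero_le_two, div_inv_eq_mul]
          ring
  have hright : ∫ x in Ioi (-s / 2), σ x * J (x + s) ≤ A / 2 * exp (-s) := by
    calc ∫ x in Ioi (-s / 2), σ x * J (x + s)
        ≤ ∫ x in Ioi (-s / 2), A * exp (-2 * s) * exp (-2 * x) :=
          setIntegral_mono_on hint.integrableOn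
            ((exp_neg_integrableOn_Ioi _ two_pos).const_mul _) measurableSet_Ioi
            fun x _ => mul_le_of_le_exp (hσ x) (hJ _) (hJexp _)
      _ = A / 2 * exp (-s) := by
          rw [integral_const_mul, integral_exp_mul_Ioi (by norm_num), neg_div_neg_eq,
            show -2 * (-s / 2) = s by ring, show -s = -2 * s + s by ring, exp_add]
          ring
  rw [← intervalIntegral.integral_Iic_add_Ioi hint.integrableOn hint.integrableOn]
  exact add_le_add hleft hright

theorem isBigO_integral_mul_comp_add (hσm : Measurable σ) (hJm : Measurable J)
    (hσ : ∀ x, σ x ∈ Icc (0 : ℝ) 1) (hb : b ≤ -1)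
    (hσb : ∀ x ≤ b, σ x ≤ E * |x| ^ (-(3/2 : ℝ) - κ)) (hκ : 0 < κ) (hJ : ∀ t, 0 ≤ J t)
    (hJexp : ∀ t, J t ≤ A * exp (-2 * t)) (hJpoly : ∀ t, J t ≤ K * (1 + |t|) ^ (1/2 : ℝ)) :
    (fun s => ∫ x, σ x * J (x + s)) =O[atTop] fun s => s ^ (-κ) := by
  set M := E * K * 2 ^ (1/2 : ℝ) * 2 ^ κ / κ
  have hbound : (fun s => ∫ x, σ x * J (x + s)) =O[atTop]
      fun s => M * s ^ (-κ) + A / 2 * exp (-s) := by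
    refine IsBigO.of_bound 1 ?_
    filter_upwards [eventually_ge_atTop (-2 * b)] with s hs
    have h0 : 0 ≤ ∫ x, σ x * J (x + s) := integral_nonneg fun x => mul_nonneg (hσ x).1 (hJ _)
    rw [one_mul, Real.norm_of_nonneg h0]
    exact (integral_mul_comp_add_le hσm hJm hσ hb hσb hκ hJ hJexp hJpoly hs).trans
      (le_abs_self _)
  have hexp : (fun s : ℝ => exp (-s)) =O[atTop] fun s => s ^ (-κ) := by
    simpa using (isLittleO_exp_neg_mul_rpow_atTop one_pos (-κ)).isBigO
  exact hbound.trans (((isBigO_refl _ _).const_mul_left M).add (hexp.const_mul_left _))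

end WeightedKernel

/-- If `σ : ℝ → [0,1]` is continuous with `σ(λ) = O(|λ|^{-3/2-κ})` as `λ → −∞` for some
`κ > 0`, then `∫_ℝ σ(λ) K_s^Ai(λ,λ) dλ` is finite for every `s`, and is `O(s^{-κ})`
as `s → +∞`.  Here `K_s^Ai(λ,λ) = ∫₀^∞ Ai(λ+η+s)² dη`, and `Ai` is the Airy function,
with its standard decay: `Ai(x) = O(e^{−x})` at `+∞` and `Ai(x) = O(|x|^{−1/4})` at
`−∞`. -/
theorem thinned_airy_trace_finite_and_decay
    (Ai σ : ℝ → ℝ) (hAic : Continuous Ai)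
    (hAitop : Ai =O[atTop] fun x => Real.exp (-x))
    (hAibot : Ai =O[atBot] fun x => |x| ^ (-(1/4 : ℝ)))
    (hσc : Continuous σ) (hσ : ∀ x, σ x ∈ Set.Icc (0:ℝ) 1)
    (κ : ℝ) (hκ : 0 < κ)
    (hdecay : σ =O[atBot] fun x => |x| ^ (-(3/2 : ℝ) - κ)) :
    (∀ s : ℝ, Integrable
      (fun l => σ l * ∫ η in Set.Ioi (0:ℝ), (Ai (l + η + s)) ^ 2)) ∧
    (fun s => ∫ l, σ l * ∫ η in Set.Ioi (0:ℝ), (Ai (l + η + s)) ^ 2)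
      =O[atTop] fun s => s ^ (-κ) := by
  obtain ⟨C, hC⟩ := isBigO_top.1 <| isBigO_top_of_isBigO_atBot_of_isBigO_atTop hAic
    continuous_neg.rexp (fun x => (exp_pos _).ne')
    (hAibot.trans (isBigO_atBot_abs_rpow_exp_neg (by norm_num))) hAitop
  have hAiexp : ∀ x, |Ai x| ≤ C * exp (-x) := by
    simpa only [Real.norm_eq_abs, abs_of_pos (exp_pos _)] using hC
  obtain ⟨c, b, hb, hAib⟩ := hAibot.exists_Iic_bound (-1)
  obtain ⟨E, b', hb', hσb⟩ := hdecay.exists_Iic_bound (-1)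
  simp only [abs_nonneg, abs_rpow_of_nonneg, abs_abs] at hAib hσb
  have hint := integrableOn_sq_Ioi_of_abs_le_exp hAic.aestronglyMeasurable hAiexp
  have hrw : ∀ s l, ∫ η in Ioi (0 : ℝ), Ai (l + η + s) ^ 2 = sqTail Ai (l + s) := fun s l => by
    simp_rw [add_right_comm l _ s]; exact setIntegral_Ioi_zero_sq_comp_add Ai (l + s)
  simp only [hrw]
  have hσb' : ∀ x ≤ b', σ x ≤ E * |x| ^ (-(3/2 : ℝ) - κ) := fun x hx =>
    (le_abs_self _).trans (hσb x hx)
  have hJm := (sqTail_antitone hint).measurable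
  have hJexp := sqTail_le_exp hAic.aestronglyMeasurable hAiexp
  have hJpoly := sqTail_le_mul_one_add_abs_rpow hint (by linarith) hAib
  exact ⟨integrable_mul_comp_add hσc.measurable hJm hσ hb' hσb' hκ (sqTail_nonneg Ai) hJexp hJpoly,
    isBigO_integral_mul_comp_add hσc.measurable hJm hσ hb' hσb' hκ (sqTail_nonneg Ai) hJexp hJpoly⟩
end
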